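/- Assume 𝔟 = 𝔱 and the Filter Dichotomy holds. Then for every non-meager filter G on ω there exist an unbounded tower T of cardinality 𝔟 and a monotone surjection φ : ω → ω such that φ(T) ⊆ φ(G). -/
import Mathlib

def EvLE (f g : ℕ → ℕ) : Prop := ∀ᶠ n in Filter.atTop, f n ≤ g n

/-- A family `S ⊆ ω^ω` is unbounded with respect to eventual domination. -/
def Ubdd (S : Set (ℕ → ℕ)) : Prop := ¬ ∃ g : ℕ → ℕ, ∀ f ∈ S, EvLE f g

/-- The bounding number 𝔟. -/
noncomputable def bNum : Cardinal :=
  sInf {c : Cardinal | ∃ S : Set (ℕ → ℕ), Ubdd S ∧ Cardinal.mk S = c}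

/-- The increasing enumeration of a subset of ℕ. -/
noncomputable def enumOf (A : Set ℕ) : ℕ → ℕ := Nat.nth (· ∈ A)

/-- `A ⊆* B` : inclusion modulo a finite set. -/
def AlmostSubset (A B : Set ℕ) : Prop := (A \ B).Finite

/-- An unbounded tower of cardinality κ, indexed by the ordinals below κ. -/
def IsUnboundedTower (κ : Cardinal) (T : {α : Ordinal // α < κ.ord} → Set ℕ) : Prop :=
  (∀ α, (T α).Infinite) ∧
  (∀ α β, α < β → AlmostSubset (T β) (T α)) ∧
  (∀ α β, α < β → ¬ AlmostSubset (T α) (T β)) ∧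
  Ubdd (Set.range fun α => enumOf (T α))

/-- A ⊆*-decreasing family of infinite sets of length κ with no infinite
pseudo-intersection. -/
def IsMaximalTower (κ : Cardinal) (T : {α : Ordinal // α < κ.ord} → Set ℕ) : Prop :=
  (∀ α, (T α).Infinite) ∧
  (∀ α β, α < β → AlmostSubset (T β) (T α)) ∧
  ¬ ∃ A : Set ℕ, A.Infinite ∧ ∀ α, AlmostSubset A (T α)

/-- The tower number 𝔱. -/
noncomputable def tNum : Cardinal :=
  sInf {κ : Cardinal | ∃ T : {α : Ordinal // α < κ.ord} → Set ℕ, IsMaximalTower κ T}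

/-- Characteristic function, identifying P(ω) with the Cantor space 2^ω. -/
noncomputable def chiB (A : Set ℕ) : ℕ → Bool := fun n => @decide (n ∈ A) (Classical.dec _)

/-- A (proper) filter on ω containing all cofinite sets. -/
def IsNPFilter (F : Set (Set ℕ)) : Prop :=
  ∅ ∉ F ∧ (∀ A ∈ F, ∀ B : Set ℕ, A ⊆ B → B ∈ F) ∧
  (∀ A ∈ F, ∀ B ∈ F, A ∩ B ∈ F) ∧
  (∀ A : Set ℕ, Aᶜ.Finite → A ∈ F)

def NonMeagerFilter (F : Set (Set ℕ)) : Prop :=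
  IsNPFilter F ∧ ¬ IsMeagre (chiB '' F)

/-- The Filter Dichotomy: any two non-meager filters have the same image under
some monotone surjection of ω (where φ(F) = {A : φ⁻¹(A) ∈ F}). -/
def FilterDichotomy : Prop :=
  ∀ F G : Set (Set ℕ), NonMeagerFilter F → NonMeagerFilter G →
    ∃ φ : ℕ → ℕ, Monotone φ ∧ Function.Surjective φ ∧
      {A : Set ℕ | φ ⁻¹' A ∈ F} = {A : Set ℕ | φ ⁻¹' A ∈ G}

/-! ### Auxiliary lemmas: almost-inclusion -/

lemma AlmostSubset.rfl {A : Set ℕ} : AlmostSubset A A := by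
  simp [AlmostSubset]

lemma AlmostSubset.of_subset {A B : Set ℕ} (h : A ⊆ B) : AlmostSubset A B := by
  simpa [AlmostSubset, Set.diff_eq_empty.2 h] using Set.finite_empty

lemma AlmostSubset.trans {A B C : Set ℕ} (h1 : AlmostSubset A B) (h2 : AlmostSubset B C) :
    AlmostSubset A C := by
  have h : A \ C ⊆ (A \ B) ∪ (B \ C) := by
    intro x hx
    by_cases hxB : x ∈ B
    · exact Or.inr ⟨hxB, hx.2⟩
    · exact Or.inl ⟨hx.1, hxB⟩
  exact Set.Finite.subset (h1.union h2) h

/-! ### Auxiliary lemmas: `Nat.nth` -/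

lemma nth_range_eq {s : ℕ → ℕ} (hs : StrictMono s) (k : ℕ) :
    Nat.nth (fun n => n ∈ Set.range s) k = s k := by
  classical
  have hmem : (fun n => n ∈ Set.range s) (s k) := ⟨k, rfl⟩
  have hcount : Nat.count (fun n => n ∈ Set.range s) (s k) = k := by
    rw [Nat.count_eq_card_filter_range]
    have h : (Finset.range (s k)).filter (fun n => n ∈ Set.range s)
        = (Finset.range k).image s := by
      ext i
      simp only [Finset.mem_filter, Finset.mem_range, Finset.mem_image, Set.mem_range]
      constructor
      · rintro ⟨hlt, m, rfl⟩
        exact ⟨m, hs.lt_iff_lt.1 hlt, rfl⟩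
      · rintro ⟨m, hm, rfl⟩
        exact ⟨hs hm, m, rfl⟩
    rw [h, Finset.card_image_of_injective _ hs.injective, Finset.card_range]
  have h := Nat.nth_count hmem
  rwa [hcount] at h

lemma bigF_strictMono (f : ℕ → ℕ) :
    StrictMono (fun n => (Finset.range (n+1)).sum f + n) := by
  intro a b hab
  have h1 : (Finset.range (a+1)).sum f ≤ (Finset.range (b+1)).sum f :=
    Finset.sum_le_sum_of_subset (by simpa using Nat.succ_le_succ hab.le)
  simp only []
  omega

lemma le_bigF (f : ℕ → ℕ) (n : ℕ) : f n ≤ (Finset.range (n+1)).sum f + n :=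
  le_trans (Finset.single_le_sum (by intro i _; exact Nat.zero_le _)
    (Finset.self_mem_range_succ n)) (Nat.le_add_right _ _)

/-! ### The pseudo-intersection lemma -/

lemma exists_pseudoInter {δ : Ordinal} (hδ : δ.card < tNum)
    (S : ∀ β, β < δ → Set ℕ) (hinf : ∀ β hβ, (S β hβ).Infinite)
    (hdec : ∀ β hβ β' hβ', β ≤ β' → AlmostSubset (S β' hβ') (S β hβ)) :
    ∃ A : Set ℕ, A.Infinite ∧ ∀ β hβ, AlmostSubset A (S β hβ) := by
  by_contra hno
  push_neg at hno
  obtain ⟨f, hf⟩ := Ordinal.exists_fundamental_sequence δ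
  have hcoflt : δ.cof < tNum := lt_of_le_of_lt (Ordinal.cof_le_card δ) hδ
  have hfl : ∀ (γ : {α : Ordinal // α < δ.cof.ord}), f γ.1 γ.2 < δ := fun γ => hf.lt γ.2
  have hmax : IsMaximalTower δ.cof (fun γ => S (f γ.1 γ.2) (hfl γ)) := by
    refine ⟨fun γ => hinf _ _, fun γ γ' hlt => hdec _ _ _ _ (hf.strict_mono γ.2 γ'.2 hlt).le, ?_⟩
    rintro ⟨A, hAinf, hA⟩
    obtain ⟨B, hBinf, hB⟩ := hno A hAinf
    have hBlt : B < Ordinal.blsub δ.cof.ord f := by rw [hf.blsub_eq]; exact hBinf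
    obtain ⟨i, hi, hle⟩ := Ordinal.lt_blsub_iff.1 hBlt
    have h1 := hA (Subtype.mk i hi)
    exact hB (AlmostSubset.trans h1 (hdec _ _ _ _ hle))
  have hmem : δ.cof ∈ {κ : Cardinal | ∃ T : {α : Ordinal // α < κ.ord} → Set ℕ,
      IsMaximalTower κ T} := ⟨_, hmax⟩
  exact absurd (csInf_le' hmem : tNum ≤ δ.cof) (not_le.2 hcoflt)

/-! ### An unbounded family indexed by the ordinals below `bNum.ord` -/

lemma bSet_nonempty : {c : Cardinal | ∃ S : Set (ℕ → ℕ), Ubdd S ∧ Cardinal.mk S = c}.Nonempty := by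
  refine ⟨Cardinal.mk (Set.univ : Set (ℕ → ℕ)), Set.univ, ?_, rfl⟩
  rintro ⟨g, hg⟩
  obtain ⟨n, hn⟩ := (hg (fun n => g n + 1) (Set.mem_univ _)).exists
  have h : g n + 1 ≤ g n := hn
  omega

lemma exists_unbdd_family :
    ∃ f : {α : Ordinal // α < bNum.ord} → (ℕ → ℕ), Ubdd (Set.range f) := by
  obtain ⟨S₀, hUb, hmk⟩ := csInf_mem bSet_nonempty
  have h1 : Cardinal.mk {α : Ordinal // α < bNum.ord} = Cardinal.lift.{1} bNum := by
    have h := Ordinal.mk_Iio_ordinal bNum.ord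
    rwa [Cardinal.card_ord] at h
  have hcard : Cardinal.lift.{1} (Cardinal.mk S₀)
      = Cardinal.lift.{0} (Cardinal.mk {α : Ordinal // α < bNum.ord}) := by
    have hmk' : Cardinal.mk S₀ = bNum := hmk
    rw [Cardinal.lift_uzero, h1, hmk']
  obtain ⟨e⟩ := Cardinal.lift_mk_eq'.1 hcard
  refine ⟨fun i => ((e.symm i : S₀) : ℕ → ℕ), ?_⟩
  have hr : Set.range (fun i : {α : Ordinal // α < bNum.ord} => ((e.symm i : S₀) : ℕ → ℕ))
      = S₀ := by
    ext x
    constructor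
    · rintro ⟨i, rfl⟩; exact (e.symm i).2
    · intro hx; exact ⟨e ⟨x, hx⟩, by simp⟩
  rwa [hr]

lemma bIdx_nonempty : Nonempty {α : Ordinal // α < bNum.ord} := by
  obtain ⟨S₀, hUb, hmk⟩ := csInf_mem bSet_nonempty
  have hne : S₀.Nonempty := by
    rcases S₀.eq_empty_or_nonempty with rfl | h
    · exact absurd ⟨fun _ => 0, fun f hf => absurd hf (Set.notMem_empty f)⟩ hUb
    · exact h
  have h0 : bNum ≠ 0 := by
    intro h
    have hmk' : Cardinal.mk S₀ = bNum := hmk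
    rw [h, Cardinal.mk_eq_zero_iff] at hmk'
    obtain ⟨x, hx⟩ := hne
    exact hmk'.false ⟨x, hx⟩
  have hlt : (0 : Ordinal) < bNum.ord := by
    rw [Cardinal.lt_ord]
    simpa using pos_iff_ne_zero.2 h0
  exact ⟨⟨0, hlt⟩⟩

/-! ### Construction of the tower by transfinite recursion -/

open Classical in
noncomputable def towerFun (g : Ordinal → ℕ → ℕ) : Ordinal → Set ℕ :=
  Ordinal.lt_wf.fix (fun α prev =>
    if h : ∃ A : Set ℕ, A.Infinite ∧
        (∀ β (hβ : β < α), AlmostSubset A (prev β hβ) ∧ ((prev β hβ) \ A).Infinite) ∧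
        (∀ k, g α k ≤ Nat.nth (· ∈ A) k)
    then h.choose else ∅)

open Classical in
lemma towerFun_def (g : Ordinal → ℕ → ℕ) (α : Ordinal) :
    towerFun g α = if h : ∃ A : Set ℕ, A.Infinite ∧
        (∀ β (_ : β < α), AlmostSubset A (towerFun g β) ∧ ((towerFun g β) \ A).Infinite) ∧
        (∀ k, g α k ≤ Nat.nth (· ∈ A) k)
      then h.choose else ∅ := by
  exact Ordinal.lt_wf.fix_eq (C := fun _ => Set ℕ) _ α

def Good (g : Ordinal → ℕ → ℕ) (α : Ordinal) (A : Set ℕ) : Prop :=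
  A.Infinite ∧
  (∀ β (_ : β < α), AlmostSubset A (towerFun g β) ∧ ((towerFun g β) \ A).Infinite) ∧
  (∀ k, g α k ≤ Nat.nth (· ∈ A) k)

lemma exists_unbounded_tower (hbt : bNum = tNum) :
    ∃ T : {α : Ordinal // α < bNum.ord} → Set ℕ, IsUnboundedTower bNum T := by
  classical
  obtain ⟨f, hf⟩ := exists_unbdd_family
  set g : Ordinal → ℕ → ℕ := fun α =>
    if h : α < bNum.ord then (fun n => (Finset.range (n+1)).sum (f ⟨α, h⟩) + n)
    else fun n => n with hg
  have hgmono : ∀ α, StrictMono (g α) := by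
    intro α
    rw [hg]
    dsimp only
    split
    · exact bigF_strictMono _
    · exact strictMono_id
  have hstep : ∀ α, α < bNum.ord → (∀ β, β < α → Good g β (towerFun g β)) →
      ∃ A, Good g α A := by
    intro α hα ih
    have hδ : α.card < tNum := by rw [← hbt]; exact Cardinal.lt_ord.1 hα
    obtain ⟨P, hPinf, hP⟩ := exists_pseudoInter hδ (fun β _ => towerFun g β)
      (fun β hβ => (ih β hβ).1)
      (by
        intro β hβ β' hβ' hle
        rcases eq_or_lt_of_le hle with h | h
        · subst h; exact AlmostSubset.rfl
        · exact ((ih β' hβ').2.1 β h).1)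
    set j : ℕ → ℕ := fun k => 2 * (g α k + k) with hj
    have hjmono : StrictMono j := by
      intro a b hab
      have h := hgmono α hab
      simp only [hj]
      omega
    set s : ℕ → ℕ := fun k => Nat.nth (· ∈ P) (j k) with hs
    have hsm : StrictMono s := (Nat.nth_strictMono hPinf).comp hjmono
    refine ⟨Set.range s, Set.infinite_range_of_injective hsm.injective, ?_, ?_⟩
    · intro β hβ
      have hsub : Set.range s ⊆ P := by
        rintro x ⟨k, rfl⟩
        exact Nat.nth_mem_of_infinite hPinf (j k)
      constructor
      · exact (AlmostSubset.of_subset hsub).trans (hP β hβ)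
      · set r : ℕ → ℕ := fun k => Nat.nth (· ∈ P) (j k + 1) with hr
        have hrm : StrictMono r :=
          (Nat.nth_strictMono hPinf).comp (fun a b hab => by
            have h := hjmono hab; omega)
        have hrP : Set.range r ⊆ P := by
          rintro x ⟨k, rfl⟩
          exact Nat.nth_mem_of_infinite hPinf _
        have hrA : ∀ x ∈ Set.range r, x ∉ Set.range s := by
          rintro x ⟨k, rfl⟩ ⟨m, hm⟩
          have h := Nat.nth_injective hPinf hm
          have h2 := hjmono.injective.ne (a₁ := m) (a₂ := k)
          simp only [hj] at h ⊢
          omega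
        have hsub2 : (Set.range r) \ (P \ towerFun g β) ⊆ towerFun g β \ Set.range s := by
          rintro x ⟨hxr, hxd⟩
          refine ⟨?_, hrA x hxr⟩
          by_contra hxt
          exact hxd ⟨hrP hxr, hxt⟩
        exact Set.Infinite.mono hsub2
          ((Set.infinite_range_of_injective hrm.injective).diff (hP β hβ))
    · intro k
      have h1 : Nat.nth (· ∈ Set.range s) k = s k := nth_range_eq hsm k
      have h2 : j k ≤ Nat.nth (· ∈ P) (j k) := (Nat.nth_strictMono hPinf).le_apply
      have h3 : g α k ≤ j k := by simp only [hj]; omega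
      calc g α k ≤ j k := h3
        _ ≤ s k := h2
        _ = Nat.nth (· ∈ Set.range s) k := h1.symm
  have hGood : ∀ α, α < bNum.ord → Good g α (towerFun g α) := by
    intro α
    induction α using Ordinal.induction with
    | h α IH =>
      intro hα
      have hex := hstep α hα (fun β hβ => IH β hβ (hβ.trans hα))
      have hex' : ∃ A : Set ℕ, A.Infinite ∧
          (∀ β (_ : β < α), AlmostSubset A (towerFun g β) ∧ ((towerFun g β) \ A).Infinite) ∧
          (∀ k, g α k ≤ Nat.nth (· ∈ A) k) := hex
      rw [Good, towerFun_def, dif_pos hex']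
      exact hex'.choose_spec
  refine ⟨fun i => towerFun g i.1, ⟨fun i => (hGood i.1 i.2).1, ?_, ?_, ?_⟩⟩
  · intro a b hab
    exact ((hGood b.1 b.2).2.1 a.1 hab).1
  · intro a b hab hAS
    exact ((hGood b.1 b.2).2.1 a.1 hab).2 hAS
  · rintro ⟨G, hG⟩
    refine hf ⟨G, ?_⟩
    rintro φ ⟨i, rfl⟩
    have h1 : EvLE (enumOf (towerFun g i.1)) G := hG _ ⟨i, rfl⟩
    refine h1.mono fun n hn => le_trans ?_ hn
    have h2 : f i n ≤ g i.1 n := by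
      rw [hg]
      dsimp only
      rw [dif_pos i.2]
      exact le_bigF (f ⟨i.1, i.2⟩) n
    exact le_trans h2 ((hGood i.1 i.2).2.2 n)

/-! ### Cantor space combinatorics: meager upward-closed families are bounded -/

def Cyl (x : ℕ → Bool) (n : ℕ) : Set (ℕ → Bool) := {y | ∀ i < n, y i = x i}

lemma isOpen_cyl (x : ℕ → Bool) (n : ℕ) : IsOpen (Cyl x n) := by
  have h : Cyl x n = ⋂ i ∈ Finset.range n, (fun y : ℕ → Bool => y i) ⁻¹' {x i} := by
    ext y; simp [Cyl]
  rw [h]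
  exact isOpen_biInter_finset fun i _ =>
    (continuous_apply i).isOpen_preimage _ (isOpen_discrete _)

lemma mem_cyl_self (x : ℕ → Bool) (n : ℕ) : x ∈ Cyl x n := fun _ _ => rfl

lemma cyl_mono {x : ℕ → Bool} {m n : ℕ} (h : m ≤ n) : Cyl x n ⊆ Cyl x m :=
  fun _ hy i hi => hy i (lt_of_lt_of_le hi h)

lemma exists_cyl_subset {U : Set (ℕ → Bool)} (hU : IsOpen U) {x : ℕ → Bool} (hx : x ∈ U) :
    ∃ n, Cyl x n ⊆ U := by
  obtain ⟨I, u, h1, h2⟩ := isOpen_pi_iff.1 hU x hx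
  refine ⟨(I.sup id) + 1, fun y hy => h2 ?_⟩
  intro a ha
  have hya : y a = x a := hy a (Nat.lt_succ_of_le (Finset.le_sup (f := id) ha))
  rw [hya]
  exact (h1 a ha).2

lemma cyl_extension {D : Set (ℕ → Bool)} (hcl : IsClosed D) (hnwd : IsNowhereDense D)
    (x : ℕ → Bool) (n : ℕ) :
    ∃ m, n ≤ m ∧ ∃ y : ℕ → Bool, (∀ i < n, y i = x i) ∧ ∀ z ∈ Cyl y m, z ∉ D := by
  have hd : Dense Dᶜ := by
    rw [← interior_eq_empty_iff_dense_compl]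
    rw [IsNowhereDense, hcl.closure_eq] at hnwd
    exact hnwd
  obtain ⟨y, hy⟩ := hd.inter_open_nonempty (Cyl x n) (isOpen_cyl x n) ⟨x, mem_cyl_self x n⟩
  obtain ⟨m, hm⟩ := exists_cyl_subset hcl.isOpen_compl hy.2
  exact ⟨max n m, le_max_left _ _, y, hy.1, fun z hz => hm (cyl_mono (le_max_right n m) hz)⟩

lemma uniform_aux {D : Set (ℕ → Bool)} (hcl : IsClosed D) (hnwd : IsNowhereDense D)
    (n : ℕ) (S : Finset ((Fin n) → Bool)) :
    ∃ m, n < m ∧ ∃ t : ((Fin n) → Bool) → (ℕ → Bool),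
      ∀ σ ∈ S, ∀ x : ℕ → Bool, (∀ i (h : i < n), x i = σ ⟨i, h⟩) →
        (∀ i, n ≤ i → i < m → x i = t σ i) → x ∉ D := by
  classical
  induction S using Finset.induction_on with
  | empty => exact ⟨n + 1, Nat.lt_succ_self n, fun _ _ => true, by simp⟩
  | @insert σ S hσS ih =>
    obtain ⟨m, hnm, t, ht⟩ := ih
    obtain ⟨m', _, y, hy1, hy2⟩ :=
      cyl_extension hcl hnwd (fun i => if h : i < n then σ ⟨i, h⟩ else true) n
    refine ⟨max m m', lt_of_lt_of_le hnm (le_max_left _ _),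
      fun σ' => if σ' = σ then y else t σ', ?_⟩
    intro σ'' hσ'' x hx1 hx2
    dsimp only at hx2
    rcases Finset.mem_insert.1 hσ'' with rfl | hmem
    · rw [if_pos rfl] at hx2
      refine hy2 x ?_
      intro i hi
      by_cases hin : i < n
      · rw [hx1 i hin, hy1 i hin]
        simp [hin]
      · exact hx2 i (le_of_not_gt hin) (lt_of_lt_of_le hi (le_max_right m m'))
    · have hne : σ'' ≠ σ := fun h => hσS (h ▸ hmem)
      rw [if_neg hne] at hx2
      exact ht σ'' hmem x hx1 fun i h1 h2 => hx2 i h1 (lt_of_lt_of_le h2 (le_max_left _ _))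

lemma uniform {D : Set (ℕ → Bool)} (hcl : IsClosed D) (hnwd : IsNowhereDense D) (n : ℕ) :
    ∃ m, n < m ∧ ∃ t : (ℕ → Bool) → (ℕ → Bool),
      ∀ s x : ℕ → Bool, (∀ i < n, x i = s i) → (∀ i, n ≤ i → i < m → x i = t s i) → x ∉ D := by
  obtain ⟨m, hnm, t, ht⟩ := uniform_aux hcl hnwd n Finset.univ
  refine ⟨m, hnm, fun s => t (fun i => s i), ?_⟩
  intro s x hx1 hx2
  exact ht (fun i => s i) (Finset.mem_univ _) x (fun i h => hx1 i h) hx2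

lemma decide_eq_bool {p : Prop} {inst : Decidable p} {b : Bool} (h : p ↔ b = true) :
    @decide p inst = b := by
  by_cases hp : p
  · rw [decide_eq_true hp, (h.1 hp).symm]
  · rw [decide_eq_false hp]
    rcases Bool.eq_false_or_eq_true b with hb | hb
    · exact absurd (h.2 hb) hp
    · exact hb.symm

lemma nwd_union {X : Type*} [TopologicalSpace X] {A B : Set X}
    (hA : IsClosed A) (hAi : interior A = ∅) (hBi : interior B = ∅) :
    interior (A ∪ B) = ∅ := by
  by_contra h
  obtain ⟨x, hx⟩ := Set.nonempty_iff_ne_empty.2 h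
  have hUopen : IsOpen (interior (A ∪ B)) := isOpen_interior
  rcases (interior (A ∪ B) \ A).eq_empty_or_nonempty with he | hne
  · have hsub : interior (A ∪ B) ⊆ A := fun z hz => by
      by_contra hzA
      exact Set.eq_empty_iff_forall_notMem.1 he z ⟨hz, hzA⟩
    have h2 : x ∈ interior A := interior_maximal hsub hUopen hx
    simp [hAi] at h2
  · obtain ⟨z, hz⟩ := hne
    have hopen : IsOpen (interior (A ∪ B) \ A) := hUopen.sdiff hA
    have hsub : interior (A ∪ B) \ A ⊆ B := fun w hw => (interior_subset hw.1).resolve_left hw.2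
    have h2 : z ∈ interior B := interior_maximal hsub hopen hz
    simp [hBi] at h2

lemma bounded_of_meagre (F : Set (Set ℕ))
    (hup : ∀ A ∈ F, ∀ B : Set ℕ, A ⊆ B → B ∈ F)
    (hm : IsMeagre (chiB '' F)) :
    ∃ g : ℕ → ℕ, ∀ A ∈ F, EvLE (enumOf A) g := by
  classical
  obtain ⟨S, hS_nwd, hS_cnt, hS_cov⟩ := isMeagre_iff_countable_union_isNowhereDense.1 hm
  rcases S.eq_empty_or_nonempty with rfl | hSne
  · refine ⟨fun _ => 0, fun A hA => ?_⟩
    exfalso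
    have h := hS_cov (Set.mem_image_of_mem chiB hA)
    simpa using h
  obtain ⟨f0, rfl⟩ := Set.Countable.exists_eq_range hS_cnt hSne
  set C : ℕ → Set (ℕ → Bool) := fun i => closure (f0 i) with hC
  have hCcl : ∀ i, IsClosed (C i) := fun _ => isClosed_closure
  have hCnwd : ∀ i, interior (C i) = ∅ := by
    intro i
    have h := (hS_nwd (f0 i) ⟨i, rfl⟩).closure
    rwa [IsNowhereDense, closure_closure] at h
  set E : ℕ → Set (ℕ → Bool) :=
    fun k => Nat.rec (C 0) (fun k Ek => Ek ∪ C (k + 1)) k with hE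
  have hEs : ∀ k, E (k + 1) = E k ∪ C (k + 1) := fun _ => rfl
  have hEcl : ∀ k, IsClosed (E k) := by
    intro k
    induction k with
    | zero => exact hCcl 0
    | succ k ihk => rw [hEs]; exact ihk.union (hCcl (k + 1))
  have hEnwd : ∀ k, interior (E k) = ∅ := by
    intro k
    induction k with
    | zero => exact hCnwd 0
    | succ k ihk => rw [hEs]; exact nwd_union (hEcl k) ihk (hCnwd (k + 1))
  have hEnwd' : ∀ k, IsNowhereDense (E k) := by
    intro k
    rw [IsNowhereDense, (hEcl k).closure_eq]
    exact hEnwd k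
  have hEmono : ∀ k l, k ≤ l → E k ⊆ E l := by
    intro k l hkl
    induction l with
    | zero => rw [Nat.le_zero.1 hkl]
    | succ l ihl =>
      rcases Nat.lt_or_ge k (l + 1) with h | h
      · rw [hEs]; exact (ihl (Nat.lt_succ_iff.1 h)).trans Set.subset_union_left
      · rw [le_antisymm hkl h]
  have hCE : ∀ i, C i ⊆ E i := by
    intro i
    cases i with
    | zero => exact subset_rfl
    | succ i => rw [hEs]; exact Set.subset_union_right
  have hcov : ∀ A ∈ F, ∃ N, chiB A ∈ E N := by
    intro A hA
    obtain ⟨tt, ⟨i, rfl⟩, hxt⟩ := hS_cov (Set.mem_image_of_mem chiB hA)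
    exact ⟨i, hCE i (subset_closure hxt)⟩
  choose M hM t ht using fun nn k => uniform (hEcl k) (hEnwd' k) nn
  set ns : ℕ → ℕ := fun k => Nat.rec 0 (fun k ih => M ih k) k with hns
  have hnss : ∀ k, ns (k + 1) = M (ns k) k := fun _ => rfl
  have hns_mono : StrictMono ns := strictMono_nat_of_lt_succ fun k => hM (ns k) k
  have hmeets : ∀ A ∈ F, ∃ K, ∀ k, K ≤ k → (A ∩ Set.Ico (ns k) (ns (k + 1))).Nonempty := by
    intro A hA
    by_contra hcon
    push_neg at hcon
    set I : Set ℕ := {k | A ∩ Set.Ico (ns k) (ns (k + 1)) = ∅} with hI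
    have hIunb : ∀ K, ∃ k, K ≤ k ∧ k ∈ I := by
      intro K
      obtain ⟨k, h1, h2⟩ := hcon K
      exact ⟨k, h1, h2⟩
    set pad : (ℕ → Bool) → ℕ → (ℕ → Bool) :=
      fun w nn => fun j => if j < nn then w j else false with hpad
    set z : ℕ → (ℕ → Bool) := fun k => Nat.rec (fun _ => true)
      (fun k zk => fun i => if i < ns k then zk i
        else if i < ns (k + 1) then (if k ∈ I then t (ns k) k (pad zk (ns k)) i else true)
        else true) k with hz
    have hzs : ∀ k, z (k + 1) = fun i => if i < ns k then z k i
        else if i < ns (k + 1) then (if k ∈ I then t (ns k) k (pad (z k) (ns k)) i else true)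
        else true := fun _ => rfl
    have hstab : ∀ k l, k ≤ l → ∀ i, i < ns k → z l i = z k i := by
      intro k l hkl
      induction l with
      | zero => rw [Nat.le_zero.1 hkl]; intro i _; rfl
      | succ l ihl =>
        rcases Nat.lt_or_ge k (l + 1) with h | h
        · have hk_le : k ≤ l := Nat.lt_succ_iff.1 h
          intro i hi
          rw [hzs l]
          have hil : i < ns l := lt_of_lt_of_le hi (hns_mono.monotone hk_le)
          simp only [if_pos hil]
          exact ihl hk_le i hi
        · rw [le_antisymm hkl h]; intro i _; rfl
    set x : ℕ → Bool := fun i => z (i + 1) i with hx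
    have hxz : ∀ k i, i < ns k → x i = z k i := by
      intro k i hi
      rcases le_total k (i + 1) with h | h
      · rw [hx]; exact hstab k (i + 1) h i hi
      · rw [hx]
        have hi2 : i < ns (i + 1) := lt_of_lt_of_le (Nat.lt_succ_self i) (hns_mono.le_apply)
        exact (hstab (i + 1) k h i hi2).symm
    have hAx : ∀ i ∈ A, x i = true := by
      intro i hiA
      have hex : ∃ k, ns k ≤ i ∧ i < ns (k + 1) := by
        by_contra hno2
        push_neg at hno2
        have hall : ∀ k, ns k ≤ i := by
          intro k
          induction k with
          | zero => exact Nat.zero_le i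
          | succ k ih => exact hno2 k ih
        have h8 := hall (i + 1)
        have h9 : i + 1 ≤ ns (i + 1) := hns_mono.le_apply
        omega
      obtain ⟨k, hns_k, hik⟩ := hex
      have hkI : k ∉ I := by
        intro hkI
        exact Set.eq_empty_iff_forall_notMem.1 hkI i ⟨hiA, hns_k, hik⟩
      rw [hxz (k + 1) i hik, hzs k]
      simp only [if_neg (not_lt.2 hns_k), if_pos hik, if_neg hkI]
    have hAsub : A ⊆ {i | x i = true} := hAx
    have hAxF : {i : ℕ | x i = true} ∈ F := hup A hA _ hAsub
    have hchi : chiB {i : ℕ | x i = true} = x := by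
      funext i
      exact decide_eq_bool Iff.rfl
    obtain ⟨N, hN⟩ := hcov _ hAxF
    rw [hchi] at hN
    obtain ⟨k, hkN, hkI⟩ := hIunb N
    refine ht (ns k) k (pad (z k) (ns k)) x ?_ ?_ (hEmono N k hkN hN)
    · intro i hi
      rw [hxz k i hi, hpad]
      simp only [if_pos hi]
    · intro i h1 h2
      rw [← hnss k] at h2
      rw [hxz (k + 1) i h2, hzs k]
      simp only [if_neg (not_lt.2 h1), if_pos h2, if_pos hkI]
  refine ⟨fun j => ns (2 * j + 2), ?_⟩
  intro A hA
  obtain ⟨K, hK⟩ := hmeets A hA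
  have hcount : ∀ j, j < Nat.count (· ∈ A) (ns (K + j + 1)) := by
    intro j
    induction j with
    | zero =>
      obtain ⟨a, haA, ha1, ha2⟩ := hK K le_rfl
      have h2 : Nat.count (· ∈ A) (a + 1) = Nat.count (· ∈ A) a + 1 := by
        rw [Nat.count_succ, if_pos haA]
      have h3 : Nat.count (· ∈ A) (a + 1) ≤ Nat.count (· ∈ A) (ns (K + 1)) :=
        Nat.count_monotone _ (by omega)
      have h4 : K + 0 + 1 = K + 1 := by omega
      rw [h4]
      omega
    | succ j ihj =>
      obtain ⟨a, haA, ha1, ha2⟩ := hK (K + j + 1) (by omega)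
      have h1 : Nat.count (· ∈ A) (ns (K + j + 1)) ≤ Nat.count (· ∈ A) a :=
        Nat.count_monotone _ ha1
      have h2 : Nat.count (· ∈ A) (a + 1) = Nat.count (· ∈ A) a + 1 := by
        rw [Nat.count_succ, if_pos haA]
      have h3 : Nat.count (· ∈ A) (a + 1) ≤ Nat.count (· ∈ A) (ns (K + j + 2)) :=
        Nat.count_monotone _ (by
          have h5 : K + j + 1 + 1 = K + j + 2 := by omega
          rw [← h5]
          omega)
      have h4 : K + (j + 1) + 1 = K + j + 2 := by omega
      rw [h4]
      omega
  refine Filter.eventually_atTop.2 ⟨K, fun j hj => ?_⟩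
  have h4 : Nat.nth (· ∈ A) j < ns (K + j + 1) := Nat.nth_lt_of_lt_count (hcount j)
  have h5 : K + j + 1 ≤ 2 * j + 2 := by omega
  exact le_trans h4.le (hns_mono.monotone h5)

/-! ### The main theorem -/

/-- If 𝔟 = 𝔱 and the Filter Dichotomy holds, then for every non-meager filter G
there are an unbounded tower T of cardinality 𝔟 and a monotone surjection φ
with φ(T) ⊆ φ(G). -/
theorem tower_into_filter_image (hbt : bNum = tNum) (hFD : FilterDichotomy) :
    ∀ G : Set (Set ℕ), NonMeagerFilter G →
      ∃ T : {α : Ordinal // α < bNum.ord} → Set ℕ, IsUnboundedTower bNum T ∧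
        ∃ φ : ℕ → ℕ, Monotone φ ∧ Function.Surjective φ ∧
          ∀ α, φ '' T α ∈ {A : Set ℕ | φ ⁻¹' A ∈ G} := by
  intro G hG
  obtain ⟨T, hTinf, hTdec, hTstrict, hTub⟩ := exists_unbounded_tower hbt
  set Fil : Set (Set ℕ) := {A | ∃ i, AlmostSubset (T i) A} with hFil
  have hdec' : ∀ i j : {α : Ordinal // α < bNum.ord}, i ≤ j → AlmostSubset (T j) (T i) := by
    intro i j hij
    rcases eq_or_lt_of_le hij with h | h
    · subst h; exact AlmostSubset.rfl
    · exact hTdec i j h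
  have hup : ∀ A ∈ Fil, ∀ B : Set ℕ, A ⊆ B → B ∈ Fil := by
    rintro A ⟨i, hi⟩ B hAB
    exact ⟨i, hi.trans (AlmostSubset.of_subset hAB)⟩
  have hNP : IsNPFilter Fil := by
    refine ⟨?_, hup, ?_, ?_⟩
    · rintro ⟨i, hi⟩
      refine hTinf i ?_
      have h : T i \ (∅ : Set ℕ) = T i := Set.diff_empty
      rwa [AlmostSubset, h] at hi
    · rintro A ⟨i, hi⟩ B ⟨j, hj⟩
      have key : ∀ (A' B' : Set ℕ) (i' j' : {α : Ordinal // α < bNum.ord}),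
          AlmostSubset (T i') A' → AlmostSubset (T j') B' → i' ≤ j' → (A' ∩ B') ∈ Fil := by
        intro A' B' i' j' hi' hj' hle
        refine ⟨j', ?_⟩
        have h1 : AlmostSubset (T j') A' := (hdec' i' j' hle).trans hi'
        have hsub : T j' \ (A' ∩ B') ⊆ (T j' \ A') ∪ (T j' \ B') := by
          intro x hx
          by_cases hxA : x ∈ A'
          · exact Or.inr ⟨hx.1, fun hxB => hx.2 ⟨hxA, hxB⟩⟩
          · exact Or.inl ⟨hx.1, hxA⟩
        exact Set.Finite.subset (Set.Finite.union h1 hj') hsub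
      rcases le_total i j with h | h
      · exact key A B i j hi hj h
      · rw [Set.inter_comm]
        exact key B A j i hj hi h
    · intro A hAc
      obtain ⟨i⟩ := bIdx_nonempty
      exact ⟨i, Set.Finite.subset hAc (fun x hx => hx.2)⟩
  have hNM : ¬ IsMeagre (chiB '' Fil) := by
    intro hm
    obtain ⟨g, hg⟩ := bounded_of_meagre Fil hup hm
    refine hTub ⟨g, ?_⟩
    rintro φ ⟨i, rfl⟩
    exact hg (T i) ⟨i, AlmostSubset.rfl⟩
  obtain ⟨φ, hφm, hφs, hφeq⟩ := hFD Fil G ⟨hNP, hNM⟩ hG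
  refine ⟨T, ⟨hTinf, hTdec, hTstrict, hTub⟩, φ, hφm, hφs, ?_⟩
  intro i
  have h1 : φ ⁻¹' (φ '' T i) ∈ Fil :=
    ⟨i, AlmostSubset.of_subset (Set.subset_preimage_image φ (T i))⟩
  have h2 : φ '' T i ∈ {A : Set ℕ | φ ⁻¹' A ∈ Fil} := h1
  rw [hφeq] at h2
  exact h2
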